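/- arXiv:1810.00979 — 8 statements merged into one kernel-verified Lean document; each statement's English description precedes it below -/
import Mathlib

section
/- Let X be a real Banach space and f : X → ℝ ∪ {+∞} a proper lower semicontinuous convex function with 0 in the interior of its effective domain. Then there exist r > 0 and a nonempty convex set A ⊆ ℝ × X* that is bounded and weak*-compact (in the product of the standard topology on ℝ and the weak* topology on X*) such that f(x) = max_{(a,p) ∈ A} (a + p(x)) for all x with ‖x‖ ≤ r. -/
/-!
Baire's theorem applied to the closed sublevel sets of `f` shows that `f` is bounded above near
some point, so `g = f.toReal` is continuous on the interior of the domain. At each `x` near `0`,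
separating `(x, g x)` from the open strict epigraph of `g` gives a subgradient `q`; as `g` is
bounded near `0`, the affine minorants `g x + q (· - x)` obtained this way lie in a fixed ball.
The affine minorants of `f` in that ball form the set `A`: the maximum at `x` is attained by the
subgradient at `x`, and `A` is weak* compact by Banach–Alaoglu, as the intersection of a compact
box with weak* closed half-spaces.
-/

open NormedSpace Set Filter Topology Metric

theorem LowerSemicontinuous.exists_sublevel_mem_nhds {X : Type*} [TopologicalSpace X]
    [BaireSpace X] {f : X → EReal} (hf : LowerSemicontinuous f)
    (hdom : (interior {x | f x ≠ ⊤}).Nonempty) :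
    ∃ x₀ ∈ interior {x | f x ≠ ⊤}, ∃ m : ℝ, {x | f x ≤ m} ∈ 𝓝 x₀ := by
  set U := interior {x | f x ≠ ⊤}
  -- adding the closed set `Uᶜ` turns the sublevel sets into a cover of the whole space
  let F : Option ℕ → Set X := fun i => i.elim Uᶜ fun m => {x | f x ≤ (m : ℝ)}
  have hF : ∀ i, IsClosed (F i) := by
    rintro (_ | m)
    · exact isOpen_interior.isClosed_compl
    · exact hf.isClosed_preimage m
  have hcover : ⋃ i, F i = univ := by
    refine eq_univ_of_forall fun x => mem_iUnion.2 ?_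
    by_cases hx : x ∈ U
    · obtain ⟨m, hm⟩ := EReal.exists_nat_ge_mul (interior_subset hx : f x ≠ ⊤) 1
      exact ⟨some m, show f x ≤ (m : ℝ) by simpa using hm⟩
    · exact ⟨none, hx⟩
  obtain ⟨x₀, hx₀U, hx₀⟩ :=
    (dense_iUnion_interior_of_closed hF hcover).inter_open_nonempty U isOpen_interior hdom
  obtain ⟨_ | m, hm⟩ := mem_iUnion.1 hx₀
  · exact absurd hx₀U (interior_subset hm)
  · exact ⟨x₀, hx₀U, m, mem_interior_iff_mem_nhds.1 hm⟩

theorem convexOn_toReal_dom {E : Type*} [AddCommGroup E] [Module ℝ E] {f : E → EReal}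
    (hbot : ∀ x, f x ≠ ⊥)
    (hconv : ∀ x y : E, ∀ a b : ℝ, 0 ≤ a → 0 ≤ b → a + b = 1 →
      f (a • x + b • y) ≤ (a : EReal) * f x + (b : EReal) * f y) :
    ConvexOn ℝ {x | f x ≠ ⊤} (fun x => (f x).toReal) := by
  have hle : ∀ x ∈ {x | f x ≠ ⊤}, ∀ y ∈ {x | f x ≠ ⊤}, ∀ a b : ℝ, 0 ≤ a → 0 ≤ b → a + b = 1 →
      f (a • x + b • y) ≤ ((a * (f x).toReal + b * (f y).toReal : ℝ) : EReal) := by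
    intro x hx y hy a b ha hb hab
    have := hconv x y a b ha hb hab
    rwa [← EReal.coe_toReal hx (hbot x), ← EReal.coe_toReal hy (hbot y), ← EReal.coe_mul,
      ← EReal.coe_mul, ← EReal.coe_add] at this
  refine ⟨fun x hx y hy a b ha hb hab => ?_, fun x hx y hy a b ha hb hab => ?_⟩
  · exact ne_top_of_le_ne_top (EReal.coe_ne_top _) (hle x hx y hy a b ha hb hab)
  · have := EReal.toReal_le_toReal (hle x hx y hy a b ha hb hab) (hbot _) (EReal.coe_ne_top _)
    rwa [EReal.toReal_coe] at this

theorem LowerSemicontinuous.continuousOn_toReal_interior {X : Type*} [NormedAddCommGroup X]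
    [NormedSpace ℝ X] [BaireSpace X] {f : X → EReal} (hf : LowerSemicontinuous f)
    (hbot : ∀ x, f x ≠ ⊥)
    (hconv : ConvexOn ℝ (interior {x | f x ≠ ⊤}) (fun x => (f x).toReal)) :
    ContinuousOn (fun x => (f x).toReal) (interior {x | f x ≠ ⊤}) := by
  rcases (interior {x | f x ≠ ⊤}).eq_empty_or_nonempty with hempty | hne
  · rw [hempty]; exact continuousOn_empty _
  obtain ⟨x₀, hx₀, m, hm⟩ := hf.exists_sublevel_mem_nhds hne
  refine ((hconv.continuousOn_tfae isOpen_interior hne).out 3 1).1 ?_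
  refine ⟨x₀, hx₀, isBoundedUnder_of_eventually_le (a := m) (mem_of_superset hm fun x hx => ?_)⟩
  simpa using EReal.toReal_le_toReal hx (hbot x) (EReal.coe_ne_top m)

section Subgradient

variable {X : Type*} [NormedAddCommGroup X] [NormedSpace ℝ X] {s : Set X} {g : X → ℝ} {x : X}

theorem ConvexOn.exists_subgradient_of_isOpen (hs : IsOpen s) (hg : ConvexOn ℝ s g)
    (hcont : ContinuousOn g s) (hx : x ∈ s) :
    ∃ q : StrongDual ℝ X, ∀ y ∈ s, g x + q (y - x) ≤ g y := by
  -- `ψ` separates `(x, g x)` from the open strict epigraph; its vertical slope `β = ψ (0, 1)` is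
  -- negative, and `-ψ (·, 0) / β` is the subgradient
  have hU : IsOpen {p : X × ℝ | p.1 ∈ s ∧ g p.1 < p.2} := by
    have hc : ContinuousOn (fun p : X × ℝ => p.2 - g p.1) (Prod.fst ⁻¹' s) :=
      continuousOn_snd.sub (hcont.comp continuousOn_fst fun _ h => h)
    convert hc.isOpen_inter_preimage (hs.preimage continuous_fst) (isOpen_Ioi (a := 0)) using 1
    ext p
    simp [sub_pos]
  obtain ⟨ψ, hψ⟩ := geometric_hahn_banach_open_point hg.convex_strict_epigraph hU
    (fun h => lt_irrefl _ h.2 : (x, g x) ∉ {p : X × ℝ | p.1 ∈ s ∧ g p.1 < p.2})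
  set β := ψ (0, 1)
  have hψ_apply : ∀ y t, ψ (y, t) = ψ (y, 0) + t * β := fun y t => by
    rw [← smul_eq_mul, ← map_smul, ← map_add]
    congr 1
    ext <;> simp
  have hβ : β < 0 := by
    have := hψ (x, g x + 1) ⟨hx, by linarith⟩
    rw [hψ_apply, hψ_apply x (g x)] at this
    linarith
  refine ⟨(-β)⁻¹ • ψ.comp (.inl ℝ X ℝ), fun y hy => ?_⟩
  have hy : ψ (y, 0) + g y * β ≤ ψ (x, 0) + g x * β := by
    refine le_of_forall_pos_lt_add fun ε hε => ?_
    have := hψ (y, g y + ε / -β) ⟨hy, by linarith [div_pos hε (neg_pos.2 hβ)]⟩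
    rw [hψ_apply, hψ_apply x, add_mul, div_neg, neg_mul, div_mul_cancel₀ ε hβ.ne] at this
    linarith
  have hψ_sub : ψ (y - x, 0) = ψ (y, 0) - ψ (x, 0) := by rw [← map_sub]; simp
  simp only [FunLike.coe_smul, ContinuousLinearMap.coe_comp, Pi.smul_apply,
    Function.comp_apply, ContinuousLinearMap.inl_apply, smul_eq_mul, hψ_sub]
  have : (-β)⁻¹ * (ψ (y, 0) - ψ (x, 0)) ≤ g y - g x := by
    rw [inv_mul_le_iff₀ (neg_pos.2 hβ)]
    linarith
  linarith

theorem ConvexOn.exists_subgradient (hg : ConvexOn ℝ s g) (hcont : ContinuousOn g (interior s))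
    (hx : x ∈ interior s) : ∃ q : StrongDual ℝ X, ∀ y ∈ s, g x + q (y - x) ≤ g y := by
  obtain ⟨q, hq⟩ := (hg.subset interior_subset hg.1.interior).exists_subgradient_of_isOpen
    isOpen_interior hcont hx
  have hmin : IsMinOn (fun y => g y - q y) s x := by
    refine IsMinOn.of_isLocalMinOn_of_convexOn (interior_subset hx) ?_
      (hg.sub (q.toLinearMap.concaveOn hg.1))
    filter_upwards [nhdsWithin_le_nhds (isOpen_interior.mem_nhds hx)] with y hy
    have := hq y hy
    simp only [map_sub] at this ⊢
    linarith
  refine ⟨q, fun y hy => ?_⟩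
  have : g x - q x ≤ g y - q y := hmin hy
  rw [map_sub]
  linarith

end Subgradient

theorem ContinuousLinearMap.norm_le_div_of_forall_le {X : Type*} [NormedAddCommGroup X]
    [NormedSpace ℝ X] (q : StrongDual ℝ X) {r c : ℝ} (hr : 0 < r)
    (h : ∀ u : X, ‖u‖ ≤ r → q u ≤ c) : ‖q‖ ≤ c / r :=
  q.opNorm_bound_of_ball_bound hr c fun u hu => by
    rw [mem_closedBall_zero_iff] at hu
    have := h (-u) (by rwa [norm_neg])
    rw [map_neg] at this
    exact abs_le.2 ⟨by linarith, h u hu⟩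

section AffineMinorants

variable {X : Type*} [NormedAddCommGroup X] [NormedSpace ℝ X]

def affineMinorants (f : X → EReal) : Set (ℝ × StrongDual ℝ X) :=
  {ap | ∀ y, ((ap.1 + ap.2 y : ℝ) : EReal) ≤ f y}

theorem convex_affineMinorants (f : X → EReal) : Convex ℝ (affineMinorants f) := by
  rintro ⟨a₁, p₁⟩ h₁ ⟨a₂, p₂⟩ h₂ s t hs ht hst y
  specialize h₁ y
  specialize h₂ y
  generalize f y = e at h₁ h₂ ⊢
  induction e using EReal.rec with
  | bot => exact absurd (le_bot_iff.1 h₁) (EReal.coe_ne_bot _)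
  | top => exact le_top
  | coe c =>
    simp only [EReal.coe_le_coe_iff] at h₁ h₂ ⊢
    simp only [Prod.smul_mk, Prod.mk_add_mk, smul_eq_mul, add_apply, smul_apply]
    calc s * a₁ + t * a₂ + (s * p₁ y + t * p₂ y) = s * (a₁ + p₁ y) + t * (a₂ + p₂ y) := by ring
      _ ≤ s * c + t * c := by gcongr
      _ = c := by rw [← add_mul, hst, one_mul]

theorem isCompact_toWeakDual_image_closedBall_inter_affineMinorants (f : X → EReal) (R : ℝ) :
    IsCompact ((fun ap : ℝ × StrongDual ℝ X => (ap.1, StrongDual.toWeakDual ap.2)) ''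
      (closedBall 0 R ∩ affineMinorants f)) := by
  have himage : (fun ap : ℝ × StrongDual ℝ X => (ap.1, StrongDual.toWeakDual ap.2)) ''
      (closedBall 0 R ∩ affineMinorants f) =
      (Icc (-R) R ×ˢ (WeakDual.toStrongDual ⁻¹' closedBall 0 R)) ∩
        ⋂ y, {aq : ℝ × WeakDual ℝ X | ((aq.1 + aq.2 y : ℝ) : EReal) ≤ f y} := by
    ext ⟨a, q⟩
    simp only [affineMinorants, mem_image, mem_inter_iff, mem_closedBall, dist_zero_right,
      mem_ofPred_eq, Prod.mk.injEq, Prod.exists, Prod.norm_mk, Real.norm_eq_abs, sup_le_iff,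
      ↓existsAndEq, true_and, mem_prod, mem_Icc, mem_preimage, mem_iInter]
    constructor
    · rintro ⟨b, ⟨⟨ha, hb⟩, hmin⟩, rfl⟩
      exact ⟨⟨abs_le.1 ha, hb⟩, hmin⟩
    · rintro ⟨⟨ha, hq⟩, hmin⟩
      exact ⟨WeakDual.toStrongDual q, ⟨⟨abs_le.2 ha, hq⟩, hmin⟩, rfl⟩
  rw [himage]
  refine (isCompact_Icc.prod (WeakDual.isCompact_closedBall 0 R)).inter_right
    (isClosed_iInter fun y => isClosed_le (continuous_coe_real_ereal.comp
      (continuous_fst.add ((WeakDual.eval_continuous y).comp continuous_snd))) continuous_const)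

theorem mem_affineMinorants_of_subgradient {f : X → EReal} (hbot : ∀ x, f x ≠ ⊥)
    {q : StrongDual ℝ X} {x : X}
    (hq : ∀ y ∈ {x | f x ≠ ⊤}, (f x).toReal + q (y - x) ≤ (f y).toReal) :
    ((f x).toReal - q x, q) ∈ affineMinorants f := by
  intro y
  by_cases hy : f y = ⊤
  · simp [hy]
  rw [← EReal.coe_toReal hy (hbot y), EReal.coe_le_coe_iff]
  have := hq y hy
  rw [map_sub] at this
  linarith

theorem mem_closedBall_of_subgradient {g : X → ℝ} {q : StrongDual ℝ X} {x : X} {r K : ℝ}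
    (hr : 0 < r) (hx : ‖x‖ ≤ r) (hK : ∀ y : X, ‖y‖ ≤ 2 * r → |g y| ≤ K)
    (hq : ∀ y : X, ‖y‖ ≤ 2 * r → g x + q (y - x) ≤ g y) :
    (g x - q x, q) ∈ closedBall (0 : ℝ × StrongDual ℝ X) (3 * K + 2 * K / r) := by
  have hshift : ∀ u : X, ‖u‖ ≤ r → ‖x + u‖ ≤ 2 * r := fun u hu => by
    linarith [norm_add_le x u]
  have hgx : |g x| ≤ K := hK x (by linarith)
  have hqu : ∀ u : X, ‖u‖ ≤ r → q u ≤ 2 * K := fun u hu => by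
    have h₁ := hq _ (hshift u hu)
    rw [add_sub_cancel_left] at h₁
    linarith [abs_le.1 (hK _ (hshift u hu)), abs_le.1 hgx]
  have hqx : |q x| ≤ 2 * K := by
    refine abs_le.2 ⟨?_, hqu x hx⟩
    have := hqu (-x) (by rwa [norm_neg])
    rw [map_neg] at this
    linarith
  have hK₀ : 0 ≤ 2 * K / r := div_nonneg (by linarith [abs_nonneg (g x)]) hr.le
  rw [mem_closedBall_zero_iff, Prod.norm_mk, Real.norm_eq_abs, sup_le_iff]
  constructor
  · linarith [abs_sub (g x) (q x)]
  · linarith [q.norm_le_div_of_forall_le hr hqu, abs_nonneg (g x)]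

theorem exists_mem_closedBall_inter_affineMinorants_eq {f : X → EReal} (hbot : ∀ x, f x ≠ ⊥)
    (hconv : ConvexOn ℝ {x | f x ≠ ⊤} (fun x => (f x).toReal))
    (hcont : ContinuousOn (fun x => (f x).toReal) (interior {x | f x ≠ ⊤})) {r K : ℝ}
    (hr : 0 < r)
    (hloc : ∀ y : X, ‖y‖ ≤ 2 * r → y ∈ interior {x | f x ≠ ⊤} ∧ |(f y).toReal| ≤ K)
    {x : X} (hx : ‖x‖ ≤ r) :
    ∃ ap ∈ closedBall 0 (3 * K + 2 * K / r) ∩ affineMinorants f,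
      f x = ((ap.1 + ap.2 x : ℝ) : EReal) := by
  have hx_int := (hloc x (by linarith)).1
  obtain ⟨q, hq⟩ := hconv.exists_subgradient hcont hx_int
  refine ⟨((f x).toReal - q x, q), ⟨?_, mem_affineMinorants_of_subgradient hbot hq⟩, ?_⟩
  · exact mem_closedBall_of_subgradient hr hx (fun y hy => (hloc y hy).2)
      fun y hy => hq y (interior_subset (hloc y hy).1)
  · rw [sub_add_cancel]
    exact (EReal.coe_toReal (interior_subset hx_int) (hbot x)).symm

end AffineMinorants

theorem stmt0 {X : Type*} [NormedAddCommGroup X] [NormedSpace ℝ X] [CompleteSpace X]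
    (f : X → EReal)
    (hproper : (∀ x, f x ≠ ⊥) ∧ ∃ x, f x ≠ ⊤)
    (hlsc : LowerSemicontinuous f)
    (hconv : ∀ x y : X, ∀ a b : ℝ, 0 ≤ a → 0 ≤ b → a + b = 1 →
      f (a • x + b • y) ≤ (a : EReal) * f x + (b : EReal) * f y)
    (hdom : (0 : X) ∈ interior {x | f x ≠ ⊤}) :
    ∃ r > (0 : ℝ), ∃ A : Set (ℝ × StrongDual ℝ X), A.Nonempty ∧ Convex ℝ A ∧
      Bornology.IsBounded A ∧
      IsCompact ((fun ap : ℝ × StrongDual ℝ X => (ap.1, StrongDual.toWeakDual ap.2)) '' A) ∧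
      ∀ x : X, ‖x‖ ≤ r → ∃ ap ∈ A, f x = ((ap.1 + ap.2 x : ℝ) : EReal) ∧
        ∀ bq ∈ A, bq.1 + bq.2 x ≤ ap.1 + ap.2 x := by
  obtain ⟨hbot, -⟩ := hproper
  set g : X → ℝ := fun x => (f x).toReal
  have hg : ConvexOn ℝ {x | f x ≠ ⊤} g := convexOn_toReal_dom hbot hconv
  have hcont : ContinuousOn g (interior {x | f x ≠ ⊤}) :=
    hlsc.continuousOn_toReal_interior hbot (hg.subset interior_subset hg.1.interior)
  obtain ⟨r, hr, K, hloc⟩ : ∃ r > 0, ∃ K : ℝ,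
      ∀ y : X, ‖y‖ ≤ 2 * r → y ∈ interior {x | f x ≠ ⊤} ∧ |g y| ≤ K := by
    have hnhds : ∀ᶠ y in 𝓝 (0 : X), y ∈ interior {x | f x ≠ ⊤} :=
      isOpen_interior.eventually_mem hdom
    have hbdd : ∀ᶠ y in 𝓝 (0 : X), |g y| < |g 0| + 1 :=
      ((continuous_abs.tendsto _).comp (hcont.continuousAt hnhds)) (Iio_mem_nhds (lt_add_one _))
    obtain ⟨ρ, hρ, hρloc⟩ := nhds_basis_closedBall.mem_iff.1 (hnhds.and hbdd)
    refine ⟨ρ / 2, by positivity, |g 0| + 1, fun y hy => ?_⟩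
    have := hρloc (mem_closedBall_zero_iff.2 (by linarith))
    exact ⟨this.1, this.2.le⟩
  have hmax := fun x (hx : ‖x‖ ≤ r) =>
    exists_mem_closedBall_inter_affineMinorants_eq hbot hg hcont hr hloc hx
  refine ⟨r, hr, closedBall 0 (3 * K + 2 * K / r) ∩ affineMinorants f, ?_,
    (convex_closedBall _ _).inter (convex_affineMinorants f),
    isBounded_closedBall.subset inter_subset_left,
    isCompact_toWeakDual_image_closedBall_inter_affineMinorants f _, fun x hx => ?_⟩
  · obtain ⟨ap, hap, -⟩ := hmax 0 (by rw [norm_zero]; exact hr.le)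
    exact ⟨ap, hap⟩
  · obtain ⟨ap, hap, hfx⟩ := hmax x hx
    exact ⟨ap, hap, hfx, fun bq hbq => EReal.coe_le_coe_iff.1 (hfx ▸ hbq.2 x)⟩
end

section
/- Let X be a real Banach space, f : X → ℝ ∪ {+∞} a proper l.s.c. convex function continuous on the interior of its domain, and suppose 0 ∈ int(dom f). Then ∂f(x) is nonempty for every x ∈ int(dom f), and defining A as the closed convex hull (in the topology τ × w*) of {(f(x) − p[x](x), p[x]) : x ∈ B(0,r)} for any selection p[x] ∈ ∂f(x), one has f(y) ≥ sup_{(a,p)∈A}(a + p(y)) for all y ∈ X with equality on B(0,r). -/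
/-!
A subgradient of `f` at an interior point `x` of its domain comes from separating the point
`(x, f x)` of the graph from the interior of the epigraph, which is nonempty because `f` is
continuous at `x`; the separating functional is not vertical since the points `(x, t)` with
`t > f x` lie in that interior.

For the second part, the subgradient inequality makes every generator `(f x - p[x] x, p[x])` an
affine minorant of `f`. For fixed `y` the pairs `(a, q)` with `a + q y ≤ f y` form a convex set that
is closed for `τ × w*`, so all of `A` consists of affine minorants, while the generator at `y`
attains `f y`.
-/

open Topology Set

section ExtendedReal

variable {X : Type*} [AddCommGroup X] [Module ℝ X] {f : X → EReal}

lemma convexOn_toReal_of_ereal (hbot : ∀ x, f x ≠ ⊥)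
    (hconv : ∀ x y : X, ∀ a b : ℝ, 0 ≤ a → 0 ≤ b → a + b = 1 →
      f (a • x + b • y) ≤ (a : EReal) * f x + (b : EReal) * f y) :
    ConvexOn ℝ {x | f x ≠ ⊤} (fun x => (f x).toReal) := by
  have hcomb : ∀ x ∈ {x | f x ≠ ⊤}, ∀ y ∈ {x | f x ≠ ⊤}, ∀ a b : ℝ, 0 ≤ a → 0 ≤ b → a + b = 1 →
      f (a • x + b • y) ≤ ((a * (f x).toReal + b * (f y).toReal : ℝ) : EReal) := by
    intro x hx y hy a b ha hb hab
    rw [EReal.coe_add, EReal.coe_mul, EReal.coe_mul, EReal.coe_toReal hx (hbot x),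
      EReal.coe_toReal hy (hbot y)]
    exact hconv x y a b ha hb hab
  refine ⟨fun x hx y hy a b ha hb hab => ?_, fun x hx y hy a b ha hb hab => ?_⟩
  · exact ne_top_of_le_ne_top (EReal.coe_ne_top _) (hcomb x hx y hy a b ha hb hab)
  · exact EReal.toReal_le_toReal (hcomb x hx y hy a b ha hb hab) (hbot _) (EReal.coe_ne_top _)

end ExtendedReal

section Subgradient

variable {E : Type*} [TopologicalSpace E] {s : Set E} {F : E → ℝ} {f : E → EReal}

lemma mem_interior_epigraph_of_continuousAt {x : E} (hs : s ∈ 𝓝 x) (hF : ContinuousAt F x)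
    {t : ℝ} (ht : F x < t) : (x, t) ∈ interior {z : E × ℝ | z.1 ∈ s ∧ F z.1 ≤ z.2} := by
  rw [mem_interior_iff_mem_nhds]
  have hfst : ∀ᶠ z in 𝓝 (x, t), z.1 ∈ s := continuousAt_fst.preimage_mem_nhds hs
  have hlt : ∀ᶠ z in 𝓝 (x, t), F z.1 < z.2 :=
    (hF.comp continuousAt_fst).eventually_lt continuousAt_snd ht
  filter_upwards [hfst, hlt] with z hz hFz using ⟨hz, hFz.le⟩

lemma graph_notMem_interior_epigraph (x : E) :
    (x, F x) ∉ interior {z : E × ℝ | z.1 ∈ s ∧ F z.1 ≤ z.2} := by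
  intro h
  have hvert : ∀ᶠ t in 𝓝 (F x), (x, t) ∈ {z : E × ℝ | z.1 ∈ s ∧ F z.1 ≤ z.2} :=
    (Continuous.prodMk_right x).continuousAt.preimage_mem_nhds (mem_interior_iff_mem_nhds.1 h)
  obtain ⟨t, ht, hxt⟩ := hvert.exists_lt
  exact ht.not_ge hxt.2

variable [AddCommGroup E] [IsTopologicalAddGroup E] [Module ℝ E] [ContinuousSMul ℝ E]

theorem ConvexOn.exists_subgradient_of_continuousAt (hconv : ConvexOn ℝ s F) {x : E}
    (hs : s ∈ 𝓝 x) (hF : ContinuousAt F x) :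
    ∃ q : StrongDual ℝ E, ∀ y ∈ s, F x + q (y - x) ≤ F y := by
  set epi := {z : E × ℝ | z.1 ∈ s ∧ F z.1 ≤ z.2}
  have hepi : Convex ℝ epi := hconv.convex_epigraph
  have habove : (x, F x + 1) ∈ interior epi :=
    mem_interior_epigraph_of_continuousAt hs hF (lt_add_one _)
  obtain ⟨φ, hφ⟩ := geometric_hahn_banach_open_point hepi.interior isOpen_interior
    (graph_notMem_interior_epigraph x)
  have hφ_epi : ∀ z ∈ epi, φ z ≤ φ (x, F x) := by
    have hclosure : closure (interior epi) ⊆ {z | φ z ≤ φ (x, F x)} :=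
      closure_minimal (fun z hz => (hφ z hz).le) (isClosed_le φ.continuous continuous_const)
    rw [hepi.closure_interior_eq_closure_of_nonempty_interior ⟨_, habove⟩] at hclosure
    exact fun z hz => hclosure (subset_closure hz)
  have hsplit : ∀ y t, φ (y, t) = φ (y, 0) + t * φ (0, 1) := fun y t => by
    rw [← smul_eq_mul, ← map_smul, ← map_add, Prod.smul_mk, smul_zero, smul_eq_mul, mul_one,
      Prod.mk_add_mk, add_zero, zero_add]
  have hvertical : φ (0, 1) < 0 := by
    have := hφ _ habove
    rw [hsplit x, hsplit x (F x)] at this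
    linarith
  refine ⟨(-φ (0, 1))⁻¹ • φ.comp (ContinuousLinearMap.inl ℝ E ℝ), fun y hy => ?_⟩
  have hy_epi := hφ_epi (y, F y) ⟨hy, le_rfl⟩
  rw [hsplit y, hsplit x] at hy_epi
  have hq : ((-φ (0, 1))⁻¹ • φ.comp (ContinuousLinearMap.inl ℝ E ℝ)) (y - x)
      = (φ (y, 0) - φ (x, 0)) / -φ (0, 1) := by
    simp only [smul_apply, ContinuousLinearMap.comp_apply, ContinuousLinearMap.inl_apply,
      map_sub, smul_eq_mul, div_eq_inv_mul, mul_sub]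
  rw [hq, ← le_sub_iff_add_le', div_le_iff₀ (neg_pos.2 hvertical)]
  linarith

theorem exists_subgradient_of_mem_interior_dom (hbot : ∀ x, f x ≠ ⊥)
    (hconv : ∀ x y : E, ∀ a b : ℝ, 0 ≤ a → 0 ≤ b → a + b = 1 →
      f (a • x + b • y) ≤ (a : EReal) * f x + (b : EReal) * f y)
    (hcont : ContinuousOn f (interior {x | f x ≠ ⊤})) {x : E}
    (hx : x ∈ interior {x | f x ≠ ⊤}) :
    ∃ q : StrongDual ℝ E, ∀ y, f x + ((q (y - x) : ℝ) : EReal) ≤ f y := by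
  have hfx : f x ≠ ⊤ := interior_subset hx
  have hcont_toReal : ContinuousAt (fun y => (f y).toReal) x := by
    have hfin : ({⊥, ⊤}ᶜ : Set EReal) ∈ 𝓝 (f x) :=
      (Set.toFinite _).isClosed.isOpen_compl.mem_nhds (by simp [hfx, hbot x])
    exact (EReal.continuousOn_toReal.continuousAt hfin).comp
      (hcont.continuousAt (isOpen_interior.mem_nhds hx))
  obtain ⟨q, hq⟩ := (convexOn_toReal_of_ereal hbot hconv).exists_subgradient_of_continuousAt
    (mem_interior_iff_mem_nhds.1 hx) hcont_toReal
  refine ⟨q, fun y => ?_⟩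
  by_cases hfy : f y = ⊤
  · simp [hfy]
  · rw [← EReal.coe_toReal hfx (hbot x), ← EReal.coe_toReal hfy (hbot y), ← EReal.coe_add,
      EReal.coe_le_coe_iff]
    exact hq y hfy

end Subgradient

section AffineMinorants

variable {X : Type*} [AddCommGroup X] [Module ℝ X] [TopologicalSpace X]

theorem iSup_closure_convexHull_le {S : Set (ℝ × WeakDual ℝ X)} {y : X} {e : EReal}
    (hS : ∀ ap ∈ S, ((ap.1 + ap.2 y : ℝ) : EReal) ≤ e) :
    (⨆ ap ∈ closure (convexHull ℝ S), ((ap.1 + ap.2 y : ℝ) : EReal)) ≤ e := by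
  set L : ℝ × WeakDual ℝ X → ℝ := fun ap => ap.1 + ap.2 y
  have hL : IsLinearMap ℝ L :=
    ⟨fun a b => show a.1 + b.1 + (a.2 y + b.2 y) = a.1 + a.2 y + (b.1 + b.2 y) by ring,
      fun c a => show c * a.1 + c * a.2 y = c * (a.1 + a.2 y) by ring⟩
  have hLcont : Continuous L := continuous_fst.add ((WeakDual.eval_continuous y).comp continuous_snd)
  have hlower : IsLowerSet {t : ℝ | (t : EReal) ≤ e} :=
    fun a b hba ha => (EReal.coe_le_coe_iff.2 hba).trans ha
  have hconvex : Convex ℝ (L ⁻¹' {t : ℝ | (t : EReal) ≤ e}) :=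
    hlower.ordConnected.convex.is_linear_preimage hL
  have hclosed : IsClosed (L ⁻¹' {t : ℝ | (t : EReal) ≤ e}) :=
    isClosed_le (continuous_coe_real_ereal.comp hLcont) continuous_const
  exact iSup₂_le fun ap hap => closure_minimal (convexHull_min hS hconvex) hclosed hap

end AffineMinorants

theorem stmt2_general {X : Type*} [NormedAddCommGroup X] [NormedSpace ℝ X]
    (f : X → EReal) (r : ℝ) (hr : 0 < r)
    (hproper : (∀ x, f x ≠ ⊥) ∧ ∃ x, f x ≠ ⊤)
    (hconv : ∀ x y : X, ∀ a b : ℝ, 0 ≤ a → 0 ≤ b → a + b = 1 →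
      f (a • x + b • y) ≤ (a : EReal) * f x + (b : EReal) * f y)
    (hcont : ContinuousOn f (interior {x | f x ≠ ⊤}))
    (g : X → ℝ) (hg : ∀ x ∈ Metric.ball (0 : X) (4 * r), f x = ((g x : ℝ) : EReal))
    (p : X → StrongDual ℝ X)
    (hp : ∀ x ∈ Metric.closedBall (0 : X) r, ∀ y : X,
      f x + ((p x (y - x) : ℝ) : EReal) ≤ f y) :
    ((∀ x ∈ interior {x | f x ≠ ⊤}, ∃ q : StrongDual ℝ X,
        ∀ y, f x + ((q (y - x) : ℝ) : EReal) ≤ f y) ∧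
      ∀ A : Set (ℝ × WeakDual ℝ X),
        A = closure (convexHull ℝ
          ((fun x => ((g x - p x x : ℝ), StrongDual.toWeakDual (p x))) ''
            Metric.closedBall (0 : X) r)) →
        ((∀ y : X, (⨆ ap ∈ A, ((ap.1 + ap.2 y : ℝ) : EReal)) ≤ f y) ∧
          ∀ y ∈ Metric.closedBall (0 : X) r,
            f y = ⨆ ap ∈ A, ((ap.1 + ap.2 y : ℝ) : EReal))) := by
  refine ⟨fun x hx => exists_subgradient_of_mem_interior_dom hproper.1 hconv hcont hx, ?_⟩
  intro A hA
  have hball : Metric.closedBall (0 : X) r ⊆ Metric.ball 0 (4 * r) :=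
    Metric.closedBall_subset_ball (by linarith)
  have hminorant : ∀ x ∈ Metric.closedBall (0 : X) r, ∀ y,
      ((g x - p x x + p x y : ℝ) : EReal) ≤ f y := fun x hx y => by
    have := hp x hx y
    rwa [hg x (hball hx), ← EReal.coe_add, map_sub, add_sub, add_sub_right_comm] at this
  have hle : ∀ y, (⨆ ap ∈ A, ((ap.1 + ap.2 y : ℝ) : EReal)) ≤ f y := fun y => by
    rw [hA]
    exact iSup_closure_convexHull_le (by rintro _ ⟨x, hx, rfl⟩; exact hminorant x hx y)
  refine ⟨hle, fun y hy => le_antisymm ?_ (hle y)⟩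
  have hgen : ((g y - p y y : ℝ), StrongDual.toWeakDual (p y)) ∈ A :=
    hA ▸ subset_closure (subset_convexHull ℝ _ (mem_image_of_mem _ hy))
  calc f y = ((g y - p y y + p y y : ℝ) : EReal) := by rw [hg y (hball hy), sub_add_cancel]
    _ ≤ _ := le_iSup₂_of_le (f := fun (ap : ℝ × WeakDual ℝ X) _ => ((ap.1 + ap.2 y : ℝ) : EReal))
        _ hgen le_rfl

theorem stmt2 {X : Type*} [NormedAddCommGroup X] [NormedSpace ℝ X] [CompleteSpace X]
    (f : X → EReal) (r C : ℝ) (hr : 0 < r)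
    (hproper : (∀ x, f x ≠ ⊥) ∧ ∃ x, f x ≠ ⊤)
    (hlsc : LowerSemicontinuous f)
    (hconv : ∀ x y : X, ∀ a b : ℝ, 0 ≤ a → 0 ≤ b → a + b = 1 →
      f (a • x + b • y) ≤ (a : EReal) * f x + (b : EReal) * f y)
    (hcont : ContinuousOn f (interior {x | f x ≠ ⊤}))
    (hdom : (0 : X) ∈ interior {x | f x ≠ ⊤})
    (g : X → ℝ) (hg : ∀ x ∈ Metric.ball (0 : X) (4 * r), f x = ((g x : ℝ) : EReal))
    (hbound : ∀ x ∈ Metric.ball (0 : X) (4 * r), |g x| ≤ C)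
    (p : X → StrongDual ℝ X)
    (hp : ∀ x ∈ Metric.closedBall (0 : X) r, ∀ y : X,
      f x + ((p x (y - x) : ℝ) : EReal) ≤ f y) :
    ((∀ x ∈ interior {x | f x ≠ ⊤}, ∃ q : StrongDual ℝ X,
        ∀ y, f x + ((q (y - x) : ℝ) : EReal) ≤ f y) ∧
      ∀ A : Set (ℝ × WeakDual ℝ X),
        A = closure (convexHull ℝ
          ((fun x => ((g x - p x x : ℝ), StrongDual.toWeakDual (p x))) ''
            Metric.closedBall (0 : X) r)) →
        ((∀ y : X, (⨆ ap ∈ A, ((ap.1 + ap.2 y : ℝ) : EReal)) ≤ f y) ∧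
          ∀ y ∈ Metric.closedBall (0 : X) r,
            f y = ⨆ ap ∈ A, ((ap.1 + ap.2 y : ℝ) : EReal))) :=
  stmt2_general f r hr hproper hconv hcont g hg p hp
end

section
/- Let X be a topological vector space, A ⊆ X a convex set, x* ∈ A a local minimizer of the problem: minimize f₀(x) over x ∈ A subject to fᵢ(x) ≤ 0 for i = 1,…,n. Suppose each φᵢ : X → ℝ ∪ {+∞} satisfies φᵢ(0) = 0, 0 ∈ int dom φᵢ, and is a weak upper convex approximation of fᵢ at x* (for each Δx there exist α₀ > 0 and β(α) → 0 with fᵢ(x* + αΔx) − fᵢ(x*) ≤ φᵢ(αΔx) + αβ(α) for α ∈ [0, α₀)). If g(·) = max{φ₀(·), φ₁(·) + f₁(x*), …, φₙ(·) + fₙ(x*)} is subhomogeneous, then 0 is a global minimizer of g on A − x*. -/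
/-! If `g (Δx) < 0` for some `Δx = z - x*` with `z ∈ A`, subhomogeneity gives `g (α Δx) < α c`
with `c < 0` for small `α > 0`. Each `φᵢ (α Δx)` is then below `α c` minus its offset, and the
upper approximation property turns this into `f₀ (x* + α Δx) < f₀ (x*)` and
`fᵢ (x* + α Δx) < 0`: the point `x* + α Δx` of `A` is feasible, close to `x*`, and strictly
better, contradicting local minimality. Since `g 0 ≤ 0` by feasibility of `x*`, this proves the
theorem. -/

open Filter Topology

section UpperApprox

variable {X : Type*} [AddCommGroup X] [Module ℝ X]

def IsWeakUpperApproxAt (f : X → ℝ) (φ : X → EReal) (xs : X) : Prop :=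
  ∀ Δx : X, ∃ α₀ > (0 : ℝ), ∃ β : ℝ → ℝ, Tendsto β (𝓝[>] (0 : ℝ)) (𝓝 0) ∧
    ∀ α : ℝ, 0 ≤ α → α < α₀ →
      ((f (xs + α • Δx) - f xs : ℝ) : EReal) ≤ φ (α • Δx) + ((α * β α : ℝ) : EReal)

theorem IsWeakUpperApproxAt.eventually_add_lt {f : X → ℝ} {φ : X → EReal} {xs : X}
    (hφ : IsWeakUpperApproxAt f φ xs) {Δx : X} {r c : ℝ} (hc : c < 0)
    (hdesc : ∀ᶠ α in 𝓝[>] (0 : ℝ), φ (α • Δx) + (r : EReal) ≤ ((α * c : ℝ) : EReal)) :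
    ∀ᶠ α in 𝓝[>] (0 : ℝ), f (xs + α • Δx) + r < f xs := by
  obtain ⟨α₀, hα₀, β, hβ, happrox⟩ := hφ Δx
  have hsmall : ∀ᶠ α in 𝓝[>] (0 : ℝ), α < α₀ :=
    eventually_nhdsWithin_of_eventually_nhds (eventually_lt_nhds hα₀)
  have hβc : ∀ᶠ α in 𝓝[>] (0 : ℝ), β α < -c := hβ.eventually (eventually_lt_nhds (by linarith))
  filter_upwards [self_mem_nhdsWithin, hsmall, hβc, hdesc] with α (hα : 0 < α) hαα₀ hβα hdescα
  have hle : ((f (xs + α • Δx) - f xs + r : ℝ) : EReal) ≤ ((α * c + α * β α : ℝ) : EReal) :=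
    calc ((f (xs + α • Δx) - f xs + r : ℝ) : EReal)
        = ((f (xs + α • Δx) - f xs : ℝ) : EReal) + (r : EReal) := EReal.coe_add _ _
      _ ≤ φ (α • Δx) + ((α * β α : ℝ) : EReal) + (r : EReal) := by
          gcongr; exact happrox α (le_of_lt hα) hαα₀
      _ = φ (α • Δx) + (r : EReal) + ((α * β α : ℝ) : EReal) := add_right_comm _ _ _
      _ ≤ ((α * c : ℝ) : EReal) + ((α * β α : ℝ) : EReal) := by gcongr
      _ = ((α * c + α * β α : ℝ) : EReal) := (EReal.coe_add _ _).symm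
  have hneg : α * c + α * β α < 0 := by
    rw [← mul_add]; exact mul_neg_of_pos_of_neg hα (by linarith)
  linarith [EReal.coe_le_coe_iff.1 hle]

end UpperApprox

theorem eventually_le_mul_of_subhomogeneous {X : Type*} [AddCommGroup X] [Module ℝ X]
    {g : X → EReal} (hsub : ∀ y : X, ∀ a : ℝ, 0 < a → a < 1 → g (a • y) ≤ (a : EReal) * g y)
    {y : X} {c : ℝ} (hc : g y ≤ c) :
    ∀ᶠ α in 𝓝[>] (0 : ℝ), g (α • y) ≤ ((α * c : ℝ) : EReal) := by
  have hlt_one : ∀ᶠ α in 𝓝[>] (0 : ℝ), α < 1 :=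
    eventually_nhdsWithin_of_eventually_nhds (eventually_lt_nhds one_pos)
  filter_upwards [self_mem_nhdsWithin, hlt_one] with α (hα : 0 < α) hα1
  calc g (α • y) ≤ (α : EReal) * g y := hsub y α hα hα1
    _ ≤ (α : EReal) * c := mul_le_mul_of_nonneg_left hc (EReal.coe_nonneg.2 hα.le)
    _ = ((α * c : ℝ) : EReal) := (EReal.coe_mul _ _).symm

theorem Convex.eventually_add_smul_sub_mem_inter {X : Type*} [AddCommGroup X] [Module ℝ X]
    [TopologicalSpace X] [ContinuousAdd X] [ContinuousSMul ℝ X] {A U : Set X}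
    (hA : Convex ℝ A) {xs z : X} (hxs : xs ∈ A) (hz : z ∈ A) (hU : U ∈ 𝓝 xs) :
    ∀ᶠ α in 𝓝[>] (0 : ℝ), xs + α • (z - xs) ∈ U ∩ A := by
  have hcont : Tendsto (fun α : ℝ => xs + α • (z - xs)) (𝓝 0) (𝓝 xs) :=
    (Continuous.tendsto' (by fun_prop) 0 xs (by simp))
  have hle_one : ∀ᶠ α in 𝓝[>] (0 : ℝ), α ≤ 1 :=
    eventually_nhdsWithin_of_eventually_nhds (eventually_le_nhds one_pos)
  filter_upwards [(hcont.mono_left nhdsWithin_le_nhds).eventually_mem hU, self_mem_nhdsWithin,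
    hle_one] with α hαU (hα : 0 < α) hα1
  exact ⟨hαU, hA.add_smul_sub_mem hxs hz ⟨hα.le, hα1⟩⟩

theorem stmt9_general {X : Type*} [AddCommGroup X] [Module ℝ X] [TopologicalSpace X]
    [IsTopologicalAddGroup X] [ContinuousSMul ℝ X]
    (n : ℕ) (A : Set X) (hA : Convex ℝ A)
    (f : Fin (n + 1) → X → ℝ) (φ : Fin (n + 1) → X → EReal) (xs : X)
    (hxs : xs ∈ A)
    (hfeas : ∀ i : Fin (n + 1), i ≠ 0 → f i xs ≤ 0)
    (hlocmin : ∃ U ∈ 𝓝 xs, ∀ x ∈ U ∩ A, (∀ i : Fin (n + 1), i ≠ 0 → f i x ≤ 0) →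
      f 0 xs ≤ f 0 x)
    (hφ0 : ∀ i, φ i 0 = 0)
    (hφuca : ∀ i, ∀ Δx : X, ∃ α₀ > (0 : ℝ), ∃ β : ℝ → ℝ,
      Tendsto β (𝓝[>] (0 : ℝ)) (𝓝 0) ∧
      ∀ α : ℝ, 0 ≤ α → α < α₀ →
        ((f i (xs + α • Δx) - f i xs : ℝ) : EReal) ≤ φ i (α • Δx) + ((α * β α : ℝ) : EReal))
    (g : X → EReal)
    (hgdef : ∀ y : X, g y = ⨆ i : Fin (n + 1),
      (φ i y + if i = 0 then 0 else ((f i xs : ℝ) : EReal)))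
    (hsub : ∀ y : X, ∀ a : ℝ, 0 < a → a < 1 → g (a • y) ≤ (a : EReal) * g y) :
    ∀ z ∈ A, g 0 ≤ g (z - xs) := by
  intro z hz
  set r : Fin (n + 1) → ℝ := fun i => if i = 0 then 0 else f i xs
  have hterm : ∀ i y, φ i y + (r i : EReal) ≤ g y := fun i y => by
    rw [hgdef]; convert le_iSup (fun j => φ j y + if j = 0 then 0 else ((f j xs : ℝ) : EReal)) i
    split_ifs <;> simp [r, *]
  have hg0 : g 0 ≤ 0 := by
    rw [hgdef]
    refine iSup_le fun i => ?_
    rw [hφ0, zero_add]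
    split_ifs with hi
    · exact le_rfl
    · exact_mod_cast hfeas i hi
  refine hg0.trans (not_lt.1 fun hneg => ?_)
  obtain ⟨c, hgc, hc⟩ := EReal.lt_iff_exists_real_btwn.1 hneg
  have hdecrease : ∀ i, ∀ᶠ α in 𝓝[>] (0 : ℝ), f i (xs + α • (z - xs)) + r i < f i xs :=
    fun i => IsWeakUpperApproxAt.eventually_add_lt (hφuca i)
      (EReal.coe_lt_coe_iff.1 hc)
      ((eventually_le_mul_of_subhomogeneous hsub hgc.le).mono fun α => (hterm i _).trans)
  obtain ⟨U, hU, hUmin⟩ := hlocmin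
  obtain ⟨α, hαUA, hα⟩ := ((hA.eventually_add_smul_sub_mem_inter hxs hz hU).and
    (eventually_all.2 hdecrease)).exists
  have hbetter := hα 0
  have hfeasible : ∀ i : Fin (n + 1), i ≠ 0 → f i (xs + α • (z - xs)) ≤ 0 := fun i hi => by
    have := hα i
    simp only [r, if_neg hi] at this
    linarith
  simp only [r, if_pos] at hbetter
  linarith [hUmin _ hαUA hfeasible]

theorem stmt9 {X : Type*} [AddCommGroup X] [Module ℝ X] [TopologicalSpace X]
    [IsTopologicalAddGroup X] [ContinuousSMul ℝ X]
    (n : ℕ) (A : Set X) (hA : Convex ℝ A)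
    (f : Fin (n + 1) → X → ℝ) (φ : Fin (n + 1) → X → EReal) (xs : X)
    (hxs : xs ∈ A)
    (hfeas : ∀ i : Fin (n + 1), i ≠ 0 → f i xs ≤ 0)
    (hlocmin : ∃ U ∈ 𝓝 xs, ∀ x ∈ U ∩ A, (∀ i : Fin (n + 1), i ≠ 0 → f i x ≤ 0) →
      f 0 xs ≤ f 0 x)
    (hφ0 : ∀ i, φ i 0 = 0)
    (hφdom : ∀ i, (0 : X) ∈ interior {y | φ i y ≠ ⊤})
    (hφconv : ∀ i, ∀ x y : X, ∀ a b : ℝ, 0 ≤ a → 0 ≤ b → a + b = 1 →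
      φ i (a • x + b • y) ≤ (a : EReal) * φ i x + (b : EReal) * φ i y)
    (hφuca : ∀ i, ∀ Δx : X, ∃ α₀ > (0 : ℝ), ∃ β : ℝ → ℝ,
      Tendsto β (𝓝[>] (0 : ℝ)) (𝓝 0) ∧
      ∀ α : ℝ, 0 ≤ α → α < α₀ →
        ((f i (xs + α • Δx) - f i xs : ℝ) : EReal) ≤ φ i (α • Δx) + ((α * β α : ℝ) : EReal))
    (g : X → EReal)
    (hgdef : ∀ y : X, g y = ⨆ i : Fin (n + 1),
      (φ i y + if i = 0 then 0 else ((f i xs : ℝ) : EReal)))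
    (hsub : ∀ y : X, ∀ a : ℝ, 0 < a → a < 1 → g (a • y) ≤ (a : EReal) * g y) :
    ∀ z ∈ A, g 0 ≤ g (z - xs) :=
  stmt9_general n A hA f φ xs hxs hfeas hlocmin hφ0 hφuca g hgdef hsub
end

section
/- Let X be a topological vector space, A ⊆ X convex, x* ∈ A a local maximizer of: maximize f₀ over x ∈ A subject to fᵢ(x) ≥ 0, i = 1,…,n. Suppose each ψᵢ : X → ℝ ∪ {−∞} satisfies ψᵢ(0) = 0, 0 ∈ int dom ψᵢ, and is a weak lower concave approximation of fᵢ at x* (for each Δx there exist α₀ > 0 and β(α) → 0 with fᵢ(x* + αΔx) − fᵢ(x*) ≥ ψᵢ(αΔx) − αβ(α)). If g(·) = min{ψ₀(·), ψ₁(·) + f₁(x*), …, ψₙ(·) + fₙ(x*)} is superhomogeneous, then 0 is a global maximizer of g on A − x*. -/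
/-!
Suppose `g (z - x*) > g 0 = 0` and pick a real `c` with `0 < c < g (z - x*)`. Along the
segment `x = x* + α (z - x*) ∈ A`, superhomogeneity gives `α c ≤ g (α (z - x*))`, and the
lower concave approximations turn this into
`f_i x - f_i x* + α β_i(α) + [i ≠ 0] f_i x* ≥ α c` for every `i`. Since `β_i(α) → 0`, for small `α > 0` the point `x` is feasible and strictly
improves `f₀`, contradicting local maximality of `x*`.
-/

open Filter Topology

theorem eventually_add_smul_mem_of_mem_nhds {X : Type*} [AddCommGroup X] [Module ℝ X]
    [TopologicalSpace X] [IsTopologicalAddGroup X] [ContinuousSMul ℝ X]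
    {x : X} {U : Set X} (hU : U ∈ 𝓝 x) (v : X) :
    ∀ᶠ α : ℝ in 𝓝[>] 0, x + α • v ∈ U := by
  have hcont : Tendsto (fun α : ℝ => x + α • v) (𝓝 0) (𝓝 x) := by
    simpa using ((continuous_id.smul continuous_const).const_add x).tendsto (0 : ℝ)
  exact (hcont.mono_left nhdsWithin_le_nhds).eventually hU

theorem Convex.eventually_add_smul_sub_mem {X : Type*} [AddCommGroup X] [Module ℝ X]
    {A : Set X} (hA : Convex ℝ A) {x z : X} (hx : x ∈ A) (hz : z ∈ A) :
    ∀ᶠ α : ℝ in 𝓝[>] 0, x + α • (z - x) ∈ A := by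
  filter_upwards [Ioo_mem_nhdsGT one_pos] with α hα
  exact hA.add_smul_sub_mem hx hz (Set.Ioo_subset_Icc_self hα)

theorem pos_add_of_coe_mul_le_add {p : EReal} {α β c d o : ℝ} (hα : 0 < α) (hβc : β < c)
    (hlower : ((α * c : ℝ) : EReal) ≤ p + o) (happrox : p - ((α * β : ℝ) : EReal) ≤ d) :
    0 < d + o := by
  have hp : p ≤ ((d + α * β : ℝ) : EReal) := by
    rw [EReal.coe_add]
    exact (EReal.sub_le_iff_le_add (.inl (EReal.coe_ne_bot _)) (.inl (EReal.coe_ne_top _))).1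
      happrox
  have hreal : α * c ≤ d + α * β + o := by
    exact_mod_cast hlower.trans (add_le_add_left hp _)
  nlinarith

theorem eventually_pos_of_lowerApprox {X : Type*} [AddCommGroup X] [Module ℝ X]
    {f : X → ℝ} {ψ : X → EReal} {x v : X} {c o α₀ : ℝ} {β : ℝ → ℝ}
    (hc : 0 < c) (hα₀ : 0 < α₀) (hβ : Tendsto β (𝓝[>] 0) (𝓝 0))
    (happrox : ∀ α : ℝ, 0 ≤ α → α < α₀ →
      ψ (α • v) - ((α * β α : ℝ) : EReal) ≤ ((f (x + α • v) - f x : ℝ) : EReal))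
    (hlower : ∀ᶠ α : ℝ in 𝓝[>] 0, ((α * c : ℝ) : EReal) ≤ ψ (α • v) + o) :
    ∀ᶠ α : ℝ in 𝓝[>] 0, 0 < f (x + α • v) - f x + o := by
  filter_upwards [Ioo_mem_nhdsGT hα₀, hβ.eventually_lt_const hc, hlower]
    with α ⟨hα0, hαα₀⟩ hβc hαc
  exact pos_add_of_coe_mul_le_add hα0 hβc hαc (happrox α hα0.le hαα₀)

theorem stmt10_general {X : Type*} [AddCommGroup X] [Module ℝ X] [TopologicalSpace X]
    [IsTopologicalAddGroup X] [ContinuousSMul ℝ X]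
    (n : ℕ) (A : Set X) (hA : Convex ℝ A)
    (f : Fin (n + 1) → X → ℝ) (ψ : Fin (n + 1) → X → EReal) (xs : X)
    (hxs : xs ∈ A)
    (hfeas : ∀ i : Fin (n + 1), i ≠ 0 → 0 ≤ f i xs)
    (hlocmax : ∃ U ∈ 𝓝 xs, ∀ x ∈ U ∩ A, (∀ i : Fin (n + 1), i ≠ 0 → 0 ≤ f i x) →
      f 0 x ≤ f 0 xs)
    (hψ0 : ∀ i, ψ i 0 = 0)
    (hψlca : ∀ i, ∀ Δx : X, ∃ α₀ > (0 : ℝ), ∃ β : ℝ → ℝ,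
      Tendsto β (𝓝[>] (0 : ℝ)) (𝓝 0) ∧
      ∀ α : ℝ, 0 ≤ α → α < α₀ →
        ψ i (α • Δx) - ((α * β α : ℝ) : EReal) ≤ ((f i (xs + α • Δx) - f i xs : ℝ) : EReal))
    (g : X → EReal)
    (hgdef : ∀ y : X, g y = ⨅ i : Fin (n + 1),
      (ψ i y + if i = 0 then 0 else ((f i xs : ℝ) : EReal)))
    (hsuper : ∀ y : X, ∀ a : ℝ, 0 < a → a < 1 → (a : EReal) * g y ≤ g (a • y)) :
    ∀ z ∈ A, g (z - xs) ≤ g 0 := by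
  intro z hz
  by_contra! hgz
  set o : Fin (n + 1) → ℝ := fun i => if i = 0 then 0 else f i xs
  have hgdef' (y : X) : g y = ⨅ i, ψ i y + o i := by
    rw [hgdef]; congr! with i; split_ifs <;> simp [o, *]
  have hg0 : 0 ≤ g 0 := by
    rw [hgdef']
    refine le_iInf fun i => ?_
    rw [hψ0, zero_add, EReal.coe_nonneg]
    by_cases hi : i = 0 <;> simp [o, hi, hfeas]
  obtain ⟨c, hc0, hcg⟩ : ∃ c : ℝ, 0 < c ∧ (c : EReal) < g (z - xs) :=
    EReal.lt_iff_exists_real_btwn.1 (hg0.trans_lt hgz) |>.imp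
      fun c hc => ⟨by exact_mod_cast hc.1, hc.2⟩
  have hlower (i) :
      ∀ᶠ α : ℝ in 𝓝[>] 0, ((α * c : ℝ) : EReal) ≤ ψ i (α • (z - xs)) + o i := by
    filter_upwards [Ioo_mem_nhdsGT one_pos] with α ⟨hα0, hα1⟩
    calc ((α * c : ℝ) : EReal) ≤ α * g (z - xs) := by
          rw [EReal.coe_mul]; gcongr
      _ ≤ g (α • (z - xs)) := hsuper _ α hα0 hα1
      _ ≤ ψ i (α • (z - xs)) + o i := (hgdef' _).trans_le (iInf_le _ i)
  have hgain (i) : ∀ᶠ α : ℝ in 𝓝[>] 0, 0 < f i (xs + α • (z - xs)) - f i xs + o i := by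
    obtain ⟨α₀, hα₀, β, hβ, happrox⟩ := hψlca i (z - xs)
    exact eventually_pos_of_lowerApprox hc0 hα₀ hβ happrox (hlower i)
  obtain ⟨U, hU, hUmax⟩ := hlocmax
  obtain ⟨α, hgainα, hαU, hαA⟩ := (eventually_all.2 hgain |>.and <|
    (eventually_add_smul_mem_of_mem_nhds hU _).and (hA.eventually_add_smul_sub_mem hxs hz)).exists
  refine (hUmax _ ⟨hαU, hαA⟩ fun i hi => ?_).not_gt ?_
  · simpa [o, hi] using (hgainα i).le
  · simpa [o] using hgainα 0

theorem stmt10 {X : Type*} [AddCommGroup X] [Module ℝ X] [TopologicalSpace X]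
    [IsTopologicalAddGroup X] [ContinuousSMul ℝ X]
    (n : ℕ) (A : Set X) (hA : Convex ℝ A)
    (f : Fin (n + 1) → X → ℝ) (ψ : Fin (n + 1) → X → EReal) (xs : X)
    (hxs : xs ∈ A)
    (hfeas : ∀ i : Fin (n + 1), i ≠ 0 → 0 ≤ f i xs)
    (hlocmax : ∃ U ∈ 𝓝 xs, ∀ x ∈ U ∩ A, (∀ i : Fin (n + 1), i ≠ 0 → 0 ≤ f i x) →
      f 0 x ≤ f 0 xs)
    (hψ0 : ∀ i, ψ i 0 = 0)
    (hψdom : ∀ i, (0 : X) ∈ interior {y | ψ i y ≠ ⊥})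
    (hψconc : ∀ i, ∀ x y : X, ∀ a b : ℝ, 0 ≤ a → 0 ≤ b → a + b = 1 →
      (a : EReal) * ψ i x + (b : EReal) * ψ i y ≤ ψ i (a • x + b • y))
    (hψlca : ∀ i, ∀ Δx : X, ∃ α₀ > (0 : ℝ), ∃ β : ℝ → ℝ,
      Tendsto β (𝓝[>] (0 : ℝ)) (𝓝 0) ∧
      ∀ α : ℝ, 0 ≤ α → α < α₀ →
        ψ i (α • Δx) - ((α * β α : ℝ) : EReal) ≤ ((f i (xs + α • Δx) - f i xs : ℝ) : EReal))
    (g : X → EReal)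
    (hgdef : ∀ y : X, g y = ⨅ i : Fin (n + 1),
      (ψ i y + if i = 0 then 0 else ((f i xs : ℝ) : EReal)))
    (hsuper : ∀ y : X, ∀ a : ℝ, 0 < a → a < 1 → (a : EReal) * g y ≤ g (a • y)) :
    ∀ z ∈ A, g (z - xs) ≤ g 0 :=
  stmt10_general n A hA f ψ xs hxs hfeas hlocmax hψ0 hψlca g hgdef hsuper
end

section
/- Let X be a normed space, M ⊆ X nonempty, x* ∈ M a local minimizer of: minimize f₀ over x ∈ M subject to fᵢ(x) ≤ 0, i = 1,…,n. Suppose each φᵢ : X → ℝ is a strong upper convex approximation of fᵢ at x* (there exist r > 0 and β(Δx) → 0 as Δx → 0 with fᵢ(x* + Δx) − fᵢ(x*) ≤ φᵢ(Δx) + ‖Δx‖β(Δx) on B(0,r)), φᵢ(0) = 0, and each φᵢ is Lipschitz near 0. If g(·) = max{φ₀(·), φ₁(·) + f₁(x*), …, φₙ(·) + fₙ(x*)} is subhomogeneous, then 0 is a global minimizer of g on the contingent (Bouligand tangent) cone T_M(x*). -/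
open Filter Topology
open scoped NNReal

theorem stmt11 {X : Type*} [NormedAddCommGroup X] [NormedSpace ℝ X]
    (n : ℕ) (M : Set X) (hM : M.Nonempty)
    (f : Fin (n + 1) → X → ℝ) (φ : Fin (n + 1) → X → ℝ) (xs : X)
    (hxs : xs ∈ M)
    (hfeas : ∀ i : Fin (n + 1), i ≠ 0 → f i xs ≤ 0)
    (hlocmin : ∃ ε > (0 : ℝ), ∀ x ∈ Metric.ball xs ε ∩ M,
      (∀ i : Fin (n + 1), i ≠ 0 → f i x ≤ 0) → f 0 xs ≤ f 0 x)
    (hφ0 : ∀ i, φ i 0 = 0)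
    (hφconv : ∀ i, ConvexOn ℝ Set.univ (φ i))
    (hφlip : ∀ i, ∃ ε > (0 : ℝ), ∃ K : ℝ≥0, LipschitzOnWith K (φ i) (Metric.ball (0 : X) ε))
    (hφuca : ∀ i, ∃ r > (0 : ℝ), ∃ β : X → ℝ,
      Tendsto β (𝓝 (0 : X)) (𝓝 0) ∧
      ∀ Δx ∈ Metric.closedBall (0 : X) r,
        f i (xs + Δx) - f i xs ≤ φ i Δx + ‖Δx‖ * β Δx)
    (g : X → ℝ)
    (hgdef : ∀ y : X, g y = ⨆ i : Fin (n + 1),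
      (φ i y + if i = 0 then 0 else f i xs))
    (hsub : ∀ y : X, ∀ a : ℝ, 0 < a → a < 1 → g (a • y) ≤ a * g y) :
    ∀ v : X, (∃ h : ℕ → ℝ, ∃ w : ℕ → X, (∀ k, 0 < h k) ∧
        Tendsto h atTop (𝓝 0) ∧ Tendsto w atTop (𝓝 v) ∧
        ∀ k, xs + h k • w k ∈ M) →
      g 0 ≤ g v := by
  rintro v ⟨h, w, hpos, hh0, hwv, hmem⟩
  have hbdd : ∀ y : X, BddAbove (Set.range fun i : Fin (n+1) =>
      φ i y + if i = 0 then 0 else f i xs) := fun y =>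
    Set.Finite.bddAbove (Set.finite_range _)
  have hg0 : g 0 = 0 := by
    rw [hgdef]
    apply le_antisymm
    · apply ciSup_le; intro i
      rw [hφ0]
      split_ifs with hi
      · simp
      · simpa using hfeas i hi
    · have := le_ciSup (hbdd 0) (0 : Fin (n+1))
      simpa [hφ0] using this
  rw [hg0]
  by_contra hgv
  push_neg at hgv
  choose ε hε K hK using hφlip
  choose r hr β hβt hβ using hφuca
  obtain ⟨εl, hεl, hloc⟩ := hlocmin
  -- uniform radii
  have hne : (Finset.univ : Finset (Fin (n+1))).Nonempty := Finset.univ_nonempty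
  set ε0 : ℝ := Finset.univ.inf' hne ε with hε0def
  set r0 : ℝ := Finset.univ.inf' hne r with hr0def
  have hε0 : 0 < ε0 := by
    rw [hε0def, Finset.lt_inf'_iff]; exact fun i _ => hε i
  have hr0 : 0 < r0 := by
    rw [hr0def, Finset.lt_inf'_iff]; exact fun i _ => hr i
  set δ : ℝ := min (min ε0 r0) εl with hδdef
  have hδ : 0 < δ := lt_min (lt_min hε0 hr0) hεl
  -- eventually conditions
  have hs0 : Tendsto (fun k => h k • w k) atTop (𝓝 (0 : X)) := by
    have := hh0.smul hwv
    simpa using this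
  have hsv0 : Tendsto (fun k => h k • v) atTop (𝓝 (0 : X)) := by
    have := hh0.smul (tendsto_const_nhds (x := v))
    simpa using this
  have E1 : ∀ᶠ k in atTop, h k < 1 := hh0.eventually_lt_const one_pos
  have E2 : ∀ᶠ k in atTop, ‖h k • w k‖ < δ := by
    have : Tendsto (fun k => ‖h k • w k‖) atTop (𝓝 0) := by
      simpa using hs0.norm
    exact this.eventually_lt_const hδ
  have E3 : ∀ᶠ k in atTop, ‖h k • v‖ < δ := by
    have : Tendsto (fun k => ‖h k • v‖) atTop (𝓝 0) := by
      simpa using hsv0.norm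
    exact this.eventually_lt_const hδ
  have E4 : ∀ᶠ k in atTop, ∀ i : Fin (n+1),
      (K i : ℝ) * ‖w k - v‖ + ‖w k‖ * β i (h k • w k) < -(g v) := by
    rw [eventually_all]
    intro i
    have ht : Tendsto (fun k => (K i : ℝ) * ‖w k - v‖ + ‖w k‖ * β i (h k • w k))
        atTop (𝓝 ((K i : ℝ) * ‖v - v‖ + ‖v‖ * 0)) := by
      exact (tendsto_const_nhds.mul ((hwv.sub tendsto_const_nhds).norm)).add
        (hwv.norm.mul ((hβt i).comp hs0))
    have ht' : Tendsto (fun k => (K i : ℝ) * ‖w k - v‖ + ‖w k‖ * β i (h k • w k))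
        atTop (𝓝 0) := by simpa using ht
    exact ht'.eventually_lt_const (by linarith)
  obtain ⟨k, hk1, hk2, hk3, hk4⟩ := (E1.and (E2.and (E3.and E4))).exists
  set a : ℝ := h k with hadef
  have ha : 0 < a := hpos k
  set Δ : X := a • w k with hΔdef
  set Δv : X := a • v with hΔvdef
  have hΔnorm : ‖Δ‖ = a * ‖w k‖ := by
    rw [hΔdef, norm_smul, Real.norm_eq_abs, abs_of_pos ha]
  have hδε0 : δ ≤ ε0 := le_trans (min_le_left _ _) (min_le_left _ _)
  have hδr0 : δ ≤ r0 := le_trans (min_le_left _ _) (min_le_right _ _)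
  have hδεl : δ ≤ εl := min_le_right _ _
  have key : ∀ i : Fin (n+1), f i (xs + Δ) ≤ f i xs +
      (a * g v - (if i = 0 then 0 else f i xs)) +
      a * ((K i : ℝ) * ‖w k - v‖ + ‖w k‖ * β i Δ) := by
    intro i
    have h1 : f i (xs + Δ) - f i xs ≤ φ i Δ + ‖Δ‖ * β i Δ := by
      apply hβ i Δ
      rw [Metric.mem_closedBall, dist_zero_right]
      have : r0 ≤ r i := Finset.inf'_le _ (Finset.mem_univ i)
      linarith [hk2]
    have hmemε : Δ ∈ Metric.ball (0 : X) (ε i) := by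
      rw [Metric.mem_ball, dist_zero_right]
      have : ε0 ≤ ε i := Finset.inf'_le _ (Finset.mem_univ i)
      linarith [hk2]
    have hmemε' : Δv ∈ Metric.ball (0 : X) (ε i) := by
      rw [Metric.mem_ball, dist_zero_right]
      have : ε0 ≤ ε i := Finset.inf'_le _ (Finset.mem_univ i)
      linarith [hk3]
    have h2 : φ i Δ ≤ φ i Δv + (K i : ℝ) * (a * ‖w k - v‖) := by
      have := (hK i).dist_le_mul Δ hmemε Δv hmemε'
      rw [Real.dist_eq] at this
      have hd : dist Δ Δv = a * ‖w k - v‖ := by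
        rw [dist_eq_norm, hΔdef, hΔvdef, ← smul_sub, norm_smul,
          Real.norm_eq_abs, abs_of_pos ha]
      rw [hd] at this
      have := abs_le.mp this
      linarith [this.1, this.2]
    have h3 : φ i Δv + (if i = 0 then 0 else f i xs) ≤ g Δv := by
      rw [hgdef]
      exact le_ciSup (hbdd Δv) i
    have h4 : g Δv ≤ a * g v := hsub v a ha hk1
    have h5 : ‖Δ‖ * β i Δ = a * (‖w k‖ * β i Δ) := by rw [hΔnorm]; ring
    have := h1
    nlinarith [h1, h2, h3, h4]
  have hterm : ∀ i : Fin (n+1),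
      a * g v + a * ((K i : ℝ) * ‖w k - v‖ + ‖w k‖ * β i Δ) < 0 := by
    intro i
    have := hk4 i
    have : g v + ((K i : ℝ) * ‖w k - v‖ + ‖w k‖ * β i Δ) < 0 := by
      rw [hΔdef]; linarith [hk4 i]
    nlinarith
  have hfeask : ∀ i : Fin (n+1), i ≠ 0 → f i (xs + Δ) ≤ 0 := by
    intro i hi
    have := key i
    rw [if_neg hi] at this
    linarith [hterm i]
  have hball : xs + Δ ∈ Metric.ball xs εl ∩ M := by
    constructor
    · rw [Metric.mem_ball, dist_eq_norm, add_sub_cancel_left]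
      linarith [hk2]
    · exact hmem k
  have hmin := hloc (xs + Δ) hball hfeask
  have h0 := key 0
  rw [if_pos rfl] at h0
  linarith [hterm 0]
end

section
/- Let X be a normed space, A ⊆ X convex, x* ∈ A a local maximizer of f₀ on A. Let {φ_λ}_{λ∈Λ} be an exhaustive family of weak upper convex approximations of f₀ at x*: inf_λ φ_λ(0) = 0 and for each admissible Δx, f₀(x* + Δx) − f₀(x*) = inf_λ φ_λ(Δx) + o(Δx, x*) with o(αΔx, x*)/α → 0 as α ↓ 0. Suppose for every g ∈ Γ(x*, A) there is α_g > 0 such that α ↦ φ_λ(αg) is convex on [0, α_g) for all λ. Then for every ε > 0 and every g ∈ γ(x*, A) there exists λ ∈ Λ with φ_λ'(0, g) ≤ ε, where φ_λ'(0,g) is the directional derivative at 0. -/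
open Filter Topology

theorem stmt12 {X : Type*} [NormedAddCommGroup X] [NormedSpace ℝ X]
    {Λ : Type*} [Nonempty Λ]
    (A : Set X) (hA : Convex ℝ A) (f₀ : X → ℝ) (xs : X) (hxs : xs ∈ A)
    (hlocmax : ∃ ε > (0 : ℝ), ∀ x ∈ Metric.ball xs ε ∩ A, f₀ x ≤ f₀ xs)
    (φ : Λ → X → ℝ)
    (hφ0 : ∀ l, 0 ≤ φ l 0)
    (hφuca : ∀ l, ∀ Δx : X, ∃ α₀ > (0 : ℝ), ∃ β : ℝ → ℝ,
      Tendsto β (𝓝[>] (0 : ℝ)) (𝓝 0) ∧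
      ∀ α : ℝ, 0 ≤ α → α < α₀ →
        f₀ (xs + α • Δx) - f₀ xs ≤ φ l (α • Δx) + α * β α)
    (hinf0 : (⨅ l, φ l 0) = 0)
    (hexh : ∀ Δx : X,
      Tendsto (fun α : ℝ => (f₀ (xs + α • Δx) - f₀ xs - ⨅ l, φ l (α • Δx)) / α)
        (𝓝[>] (0 : ℝ)) (𝓝 0))
    (hconv : ∀ g ∈ closure {g : X | ∃ α > (0 : ℝ), xs + α • g ∈ A},
      ∃ αg > (0 : ℝ), ∀ l, ConvexOn ℝ (Set.Ico (0 : ℝ) αg)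
        (fun α : ℝ => φ l (α • g))) :
    ∀ ε > (0 : ℝ), ∀ g : X, (∃ α > (0 : ℝ), xs + α • g ∈ A) →
      ∃ l : Λ, ∀ α₀ > (0 : ℝ), ∃ α : ℝ, 0 < α ∧ α < α₀ ∧
        (φ l (α • g) - φ l 0) / α ≤ ε := by
  intro ε hε g hg
  obtain ⟨εb, hεb, hmax⟩ := hlocmax
  obtain ⟨αa, hαa, hxA⟩ := hg
  have hgcl : g ∈ closure {g : X | ∃ α > (0 : ℝ), xs + α • g ∈ A} :=
    subset_closure ⟨αa, hαa, hxA⟩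
  obtain ⟨αg, hαg, hconvg⟩ := hconv g hgcl
  -- local max along g : for 0 ≤ t ≤ αa with t‖g‖ < εb, f₀ (xs + t•g) ≤ f₀ xs
  have hfle : ∀ t : ℝ, 0 ≤ t → t ≤ αa → t * ‖g‖ < εb → f₀ (xs + t • g) ≤ f₀ xs := by
    intro t ht htα hnorm
    apply hmax
    constructor
    · simp only [Metric.mem_ball, dist_eq_norm]
      simpa [norm_smul, abs_of_nonneg ht] using hnorm
    · have : xs + t • g = (1 - t / αa) • xs + (t / αa) • (xs + αa • g) := by
        have hαa' : αa ≠ 0 := ne_of_gt hαa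
        rw [smul_add, smul_smul, div_mul_cancel₀ _ hαa']
        module
      rw [this]
      exact hA hxs hxA (by
          have := div_le_one_of_le₀ htα hαa.le
          linarith) (by positivity) (by ring)
  -- get δ from hexh
  have hev : ∀ᶠ α in 𝓝[>] (0:ℝ),
      |(f₀ (xs + α • g) - f₀ xs - ⨅ l, φ l (α • g)) / α| < ε / 2 := by
    have := (hexh g).eventually (eventually_abs_sub_lt 0 (by positivity : (0:ℝ) < ε/2))
    simpa using this
  rw [eventually_nhdsWithin_iff, Metric.eventually_nhds_iff] at hev
  obtain ⟨δ, hδ, hδev⟩ := hev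
  -- choose α
  set α : ℝ := min (min (δ/2) (αg/2)) (min αa (εb / (2 * (‖g‖ + 1)))) with hαdef
  have hα0 : 0 < α := by
    have : (0:ℝ) < ‖g‖ + 1 := by positivity
    apply lt_min (lt_min (by linarith) (by linarith)) (lt_min hαa (by positivity))
  have hαδ : α < δ := lt_of_le_of_lt ((min_le_left _ _).trans (min_le_left _ _)) (by linarith)
  have hααg : α < αg := lt_of_le_of_lt ((min_le_left _ _).trans (min_le_right _ _)) (by linarith)
  have hααa : α ≤ αa := (min_le_right _ _).trans (min_le_left _ _)
  have hαεb : α * ‖g‖ < εb := by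
    have h1 : α ≤ εb / (2 * (‖g‖ + 1)) := (min_le_right _ _).trans (min_le_right _ _)
    have h2 : (0:ℝ) < 2 * (‖g‖ + 1) := by positivity
    rw [le_div_iff₀ h2] at h1
    nlinarith [hα0, norm_nonneg g]
  have hDle : f₀ (xs + α • g) - f₀ xs ≤ 0 := by
    have := hfle α hα0.le hααa hαεb; linarith
  have hq : |(f₀ (xs + α • g) - f₀ xs - ⨅ l, φ l (α • g)) / α| < ε / 2 := by
    apply hδev
    · simpa [abs_of_nonneg hα0.le] using hαδ
    · exact hα0
  have hinflt : (⨅ l, φ l (α • g)) < α * ε := by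
    rw [abs_lt] at hq
    have h1 : -(ε/2) < (f₀ (xs + α • g) - f₀ xs - ⨅ l, φ l (α • g)) / α := hq.1
    have h2 : -(ε/2) * α < f₀ (xs + α • g) - f₀ xs - ⨅ l, φ l (α • g) := by
      calc -(ε/2) * α = (-(ε/2)) * α := rfl
        _ < ((f₀ (xs + α • g) - f₀ xs - ⨅ l, φ l (α • g)) / α) * α := by
            exact mul_lt_mul_of_pos_right h1 hα0
        _ = f₀ (xs + α • g) - f₀ xs - ⨅ l, φ l (α • g) := by
            field_simp
    nlinarith
  obtain ⟨l, hl⟩ := exists_lt_of_ciInf_lt hinflt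
  refine ⟨l, ?_⟩
  intro α₀ hα₀
  have key : ∀ α' : ℝ, 0 < α' → α' ≤ α → (φ l (α' • g) - φ l 0) / α' ≤ ε := by
    intro α' hα'0 hα'α
    have hmem0 : (0:ℝ) ∈ Set.Ico (0:ℝ) αg := ⟨le_refl _, hαg⟩
    have hmemα : α ∈ Set.Ico (0:ℝ) αg := ⟨hα0.le, hααg⟩
    have hmemα' : α' ∈ Set.Ico (0:ℝ) αg := ⟨hα'0.le, lt_of_le_of_lt hα'α hααg⟩
    have hsec := (hconvg l).secant_mono hmem0 hmemα' hmemα (ne_of_gt hα'0)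
      (ne_of_gt hα0) hα'α
    simp only [zero_smul, sub_zero] at hsec
    have hfin : (φ l (α • g) - φ l 0) / α ≤ ε := by
      rw [div_le_iff₀ hα0]
      have := hφ0 l
      nlinarith [hl]
    calc (φ l (α' • g) - φ l 0) / α' ≤ (φ l (α • g) - φ l 0) / α := hsec
      _ ≤ ε := hfin
  refine ⟨min α (α₀/2), lt_min hα0 (by linarith), ?_, ?_⟩
  · exact lt_of_le_of_lt (min_le_right _ _) (by linarith)
  · exact key _ (lt_min hα0 (by linarith)) (min_le_left _ _)
end

section
/- Let X be a normed space, Ω ⊆ X open, Fᵢ : Ω → ℝ (i = 1,…,n) functions each admitting at x ∈ Ω an expansion Fᵢ(x + Δx) − Fᵢ(x) = Φᵢ(Δx) + Ψᵢ(Δx) + oᵢ(Δx) with Φᵢ convex, Ψᵢ concave, Φᵢ(0) + Ψᵢ(0) = 0, and oᵢ(αΔx)/α → 0 as α ↓ 0. Then F = max_{i} Fᵢ satisfies F(x + Δx) − F(x) = Φ(Δx) + Ψ(Δx) + o(Δx) where Φ(·) = max_i (Fᵢ(x) − F(x) + Φᵢ(·) − Σ_{j≠i} Ψⱼ(·)) is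 convex, Ψ(·) = Σ_k Ψ_k(·) is concave, Φ(0) + Ψ(0) = 0, and o(αΔx)/α → 0 as α ↓ 0. -/
open Filter Topology

private lemma fin_bdd {ι : Type*} [Finite ι] (f : ι → ℝ) : BddAbove (Set.range f) :=
  (Set.finite_range f).bddAbove

private lemma ciSup_shift {ι : Type*} [Finite ι] [Nonempty ι] (f : ι → ℝ) (c : ℝ) :
    (⨆ i, (f i + c)) = (⨆ i, f i) + c := by
  obtain ⟨i0, hi0⟩ := Finite.exists_max f
  have h1 : (⨆ i, f i) = f i0 :=
    le_antisymm (ciSup_le hi0) (le_ciSup (fin_bdd f) i0)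
  have h2 : (⨆ i, (f i + c)) = f i0 + c :=
    le_antisymm (ciSup_le fun i => by linarith [hi0 i])
      (le_ciSup (fin_bdd fun i => f i + c) i0)
  rw [h1, h2]

private lemma ciSup_abs_sub {ι : Type*} [Fintype ι] [Nonempty ι] (a b : ι → ℝ) :
    |(⨆ i, (a i + b i)) - ⨆ i, a i| ≤ ∑ i, |b i| := by
  have hb : ∀ i, |b i| ≤ ∑ j, |b j| := fun i =>
    Finset.single_le_sum (fun j _ => abs_nonneg (b j)) (Finset.mem_univ i)
  rw [abs_sub_le_iff]
  constructor
  · have : (⨆ i, (a i + b i)) ≤ (⨆ i, a i) + ∑ j, |b j| := by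
      refine ciSup_le fun i => ?_
      have h1 := le_ciSup (fin_bdd a) i
      have h2 := abs_le.1 (hb i)
      linarith [le_abs_self (b i)]
    linarith
  · have : (⨆ i, a i) ≤ (⨆ i, (a i + b i)) + ∑ j, |b j| := by
      refine ciSup_le fun i => ?_
      have h1 := le_ciSup (fin_bdd fun i => a i + b i) i
      have h2 := neg_abs_le (b i)
      have h3 := hb i
      linarith
    linarith

private lemma convexOn_ciSup {X : Type*} [AddCommMonoid X] [Module ℝ X]
    {ι : Type*} [Finite ι] [Nonempty ι] (g : ι → X → ℝ)
    (hg : ∀ i, ConvexOn ℝ Set.univ (g i)) :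
    ConvexOn ℝ Set.univ (fun y => ⨆ i, g i y) := by
  refine ⟨convex_univ, fun p _ q _ a b ha hb hab => ?_⟩
  refine ciSup_le fun i => ?_
  have h1 := (hg i).2 (Set.mem_univ p) (Set.mem_univ q) ha hb hab
  have h2 := le_ciSup (fin_bdd fun i => g i p) i
  have h3 := le_ciSup (fin_bdd fun i => g i q) i
  simp only [smul_eq_mul] at *
  nlinarith

private lemma concaveOn_finset_sum {X : Type*} [AddCommMonoid X] [Module ℝ X]
    {ι : Type*} (s : Finset ι) (g : ι → X → ℝ)
    (hg : ∀ i ∈ s, ConcaveOn ℝ Set.univ (g i)) :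
    ConcaveOn ℝ Set.univ (fun y => ∑ i ∈ s, g i y) := by
  induction s using Finset.cons_induction with
  | empty => simpa using concaveOn_const (0 : ℝ) convex_univ
  | cons i s hi ih =>
      simp only [Finset.sum_cons]
      exact (hg i (Finset.mem_cons_self i s)).add
        (ih fun j hj => hg j (Finset.mem_cons_of_mem hj))

theorem stmt16 {X : Type*} [NormedAddCommGroup X] [NormedSpace ℝ X]
    (n : ℕ) (Ω : Set X) (hΩ : IsOpen Ω) (x : X) (hx : x ∈ Ω)
    (F : Fin (n + 1) → X → ℝ) (Φ Ψ : Fin (n + 1) → X → ℝ) (o : Fin (n + 1) → X → ℝ)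
    (hΦ : ∀ i, ConvexOn ℝ Set.univ (Φ i))
    (hΨ : ∀ i, ConcaveOn ℝ Set.univ (Ψ i))
    (h0 : ∀ i, Φ i 0 + Ψ i 0 = 0)
    (hexp : ∀ i, ∀ Δx : X, x + Δx ∈ Ω →
      F i (x + Δx) - F i x = Φ i Δx + Ψ i Δx + o i Δx)
    (ho : ∀ i, ∀ Δx : X,
      Tendsto (fun α : ℝ => o i (α • Δx) / α) (𝓝[>] (0 : ℝ)) (𝓝 0)) :
    ConvexOn ℝ Set.univ (fun y : X => ⨆ i, (F i x - (⨆ j, F j x) + Φ i y -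
        ∑ j ∈ Finset.univ.erase i, Ψ j y)) ∧
    ConcaveOn ℝ Set.univ (fun y : X => ∑ k, Ψ k y) ∧
    (⨆ i, (F i x - (⨆ j, F j x) + Φ i (0 : X) - ∑ j ∈ Finset.univ.erase i, Ψ j (0 : X))) +
      (∑ k, Ψ k (0 : X)) = 0 ∧
    ∀ Δx : X, Tendsto (fun α : ℝ =>
        ((⨆ i, F i (x + α • Δx)) - (⨆ i, F i x)
          - (⨆ i, (F i x - (⨆ j, F j x) + Φ i (α • Δx) -
              ∑ j ∈ Finset.univ.erase i, Ψ j (α • Δx)))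
          - ∑ k, Ψ k (α • Δx)) / α)
      (𝓝[>] (0 : ℝ)) (𝓝 0) := by
  have herase : ∀ (f : Fin (n+1) → ℝ) (i : Fin (n+1)),
      ∑ j ∈ Finset.univ.erase i, f j = (∑ j, f j) - f i := by
    intro f i
    have := Finset.add_sum_erase Finset.univ f (Finset.mem_univ i)
    linarith
  have hterm : ∀ (y : X) (i : Fin (n+1)),
      F i x - (⨆ j, F j x) + Φ i y - ∑ j ∈ Finset.univ.erase i, Ψ j y
        = F i x - (⨆ j, F j x) + Φ i y + Ψ i y - ∑ j, Ψ j y := by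
    intro y i; rw [herase]; ring
  refine ⟨?_, ?_, ?_, ?_⟩
  · -- convexity
    refine convexOn_ciSup _ fun i => ?_
    have h2 : ConvexOn ℝ Set.univ fun y => -∑ j ∈ Finset.univ.erase i, Ψ j y :=
      (concaveOn_finset_sum _ _ fun j _ => hΨ j).neg
    have h3 := ((hΦ i).add h2).add_const (F i x - (⨆ j, F j x))
    exact h3.congr (by intro y _; simp; ring)
  · exact concaveOn_finset_sum _ _ fun k _ => hΨ k
  · -- value at 0
    obtain ⟨i0, hi0⟩ := Finite.exists_max fun i => F i x
    have hFx : (⨆ j, F j x) = F i0 x :=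
      le_antisymm (ciSup_le hi0) (le_ciSup (fin_bdd fun j => F j x) i0)
    have hsup : (⨆ i, (F i x - (⨆ j, F j x) + Φ i (0:X) -
        ∑ j ∈ Finset.univ.erase i, Ψ j (0:X))) = - ∑ k, Ψ k (0:X) := by
      apply le_antisymm
      · refine ciSup_le fun i => ?_
        rw [hterm]
        have hle : F i x ≤ ⨆ j, F j x := le_ciSup (fin_bdd fun j => F j x) i
        linarith [h0 i]
      · have h1 := le_ciSup (fin_bdd fun i => F i x - (⨆ j, F j x) + Φ i (0:X) -
          ∑ j ∈ Finset.univ.erase i, Ψ j (0:X)) i0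
        refine le_trans ?_ h1
        rw [hterm, hFx]
        linarith [h0 i0]
    rw [hsup]; ring
  · intro Δx
    set Fx := ⨆ j, F j x with hFxdef
    have key : ∀ u : X, x + u ∈ Ω →
        |(⨆ i, F i (x + u)) - Fx
          - (⨆ i, (F i x - Fx + Φ i u - ∑ j ∈ Finset.univ.erase i, Ψ j u))
          - ∑ k, Ψ k u| ≤ ∑ i, |o i u| := by
      intro u hu
      set a : Fin (n+1) → ℝ := fun i =>
        F i x - Fx + Φ i u - ∑ j ∈ Finset.univ.erase i, Ψ j u with ha
      have hF : (⨆ i, F i (x + u)) = (⨆ i, (a i + o i u)) + (Fx + ∑ k, Ψ k u) := by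
        rw [← ciSup_shift (fun i => a i + o i u) (Fx + ∑ k, Ψ k u)]
        refine iSup_congr fun i => ?_
        have he := hexp i u hu
        have hai : a i = F i x - Fx + Φ i u + Ψ i u - ∑ j, Ψ j u := by
          rw [ha]; exact hterm u i
        rw [hai]; linarith
      rw [hF]
      have hmain := ciSup_abs_sub a (fun i => o i u)
      have heq : (⨆ i, (a i + o i u)) + (Fx + ∑ k, Ψ k u) - Fx - (⨆ i, a i) - ∑ k, Ψ k u
          = (⨆ i, (a i + o i u)) - ⨆ i, a i := by ring
      rw [heq]
      exact hmain
    have hmem : ∀ᶠ α : ℝ in 𝓝[>] 0, x + α • Δx ∈ Ω := by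
      have hc : Continuous fun α : ℝ => x + α • Δx := by continuity
      have ht : Tendsto (fun α : ℝ => x + α • Δx) (𝓝 0) (𝓝 x) := by
        have := hc.tendsto 0
        simpa using this
      exact (ht.mono_left nhdsWithin_le_nhds).eventually (hΩ.eventually_mem hx)
    have hbound : Tendsto (fun α : ℝ => ∑ i, |o i (α • Δx) / α|) (𝓝[>] (0:ℝ)) (𝓝 0) := by
      have : Tendsto (fun α : ℝ => ∑ i : Fin (n+1), |o i (α • Δx) / α|)
          (𝓝[>] (0:ℝ)) (𝓝 (∑ i : Fin (n+1), |(0:ℝ)|)) :=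
        tendsto_finset_sum _ fun i _ => (ho i Δx).abs
      simpa using this
    rw [tendsto_zero_iff_norm_tendsto_zero]
    refine squeeze_zero' (Eventually.of_forall fun α => norm_nonneg _) ?_ hbound
    filter_upwards [hmem, self_mem_nhdsWithin] with α hαΩ hα
    have hα' : (0:ℝ) < α := hα
    have hk := key (α • Δx) hαΩ
    rw [Real.norm_eq_abs, abs_div, abs_of_pos hα']
    rw [div_le_iff₀ hα']
    calc |(⨆ i, F i (x + α • Δx)) - Fx
          - (⨆ i, (F i x - Fx + Φ i (α • Δx) - ∑ j ∈ Finset.univ.erase i, Ψ j (α • Δx)))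
          - ∑ k, Ψ k (α • Δx)| ≤ ∑ i, |o i (α • Δx)| := hk
      _ = (∑ i, |o i (α • Δx) / α|) * α := by
          rw [Finset.sum_mul]
          refine Finset.sum_congr rfl fun i _ => ?_
          rw [abs_div, abs_of_pos hα', div_mul_cancel₀ _ (ne_of_gt hα')]
end

section
/- Let X, Y be normed spaces, Ω ⊆ X open, F : Ω → ℝ admit at x = G(y) an expansion F(x + Δx) − F(x) = Φ(Δx) + Ψ(Δx) + o_F(Δx) with Φ, Ψ Lipschitz near 0, Φ(0) + Ψ(0) = 0, and ‖o_F(Δx)‖/‖Δx‖ → 0 as Δx → 0 (Fréchet-type remainder). Let G : S → X (S ⊆ Y open, y ∈ S) be continuous at y and Gâteaux differentiable at y with derivative δG[y]. Then T = F ∘ G is defined on a neighbourhood of y and T(y + Δy) − T(y) = Φ(δG[y](Δy)) + Ψ(δG[y](Δy)) + o(Δy) where o(αΔy)/α → 0 as α ↓ 0 for each fixed Δy (Gâteaux-type remainder). -/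
open Filter Topology
open scoped NNReal

theorem stmt18 {X Y : Type*} [NormedAddCommGroup X] [NormedSpace ℝ X]
    [NormedAddCommGroup Y] [NormedSpace ℝ Y]
    (Ω : Set X) (hΩ : IsOpen Ω) (S : Set Y) (hS : IsOpen S) (y : Y) (hy : y ∈ S)
    (G : Y → X) (hGx : G y ∈ Ω) (hGc : ContinuousAt G y)
    (δG : Y →L[ℝ] X)
    (hG : ∀ Δy : Y, Tendsto (fun α : ℝ => ‖G (y + α • Δy) - G y - α • δG Δy‖ / α)
      (𝓝[>] (0 : ℝ)) (𝓝 0))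
    (F : X → ℝ) (Φ Ψ : X → ℝ) (oF : X → ℝ) (L ε : ℝ≥0) (hε : 0 < (ε : ℝ))
    (hΦ : LipschitzOnWith L Φ (Metric.ball (0 : X) ε))
    (hΨ : LipschitzOnWith L Ψ (Metric.ball (0 : X) ε))
    (h0 : Φ 0 + Ψ 0 = 0)
    (hexp : ∀ Δx : X, G y + Δx ∈ Ω → F (G y + Δx) - F (G y) = Φ Δx + Ψ Δx + oF Δx)
    (hoF : Tendsto (fun Δx : X => |oF Δx| / ‖Δx‖) (𝓝[≠] (0 : X)) (𝓝 0)) :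
    ∃ ρ > (0 : ℝ), (∀ Δy ∈ Metric.ball (0 : Y) ρ, y + Δy ∈ S ∧ G (y + Δy) ∈ Ω) ∧
      ∀ Δy : Y, Tendsto (fun α : ℝ =>
          (F (G (y + α • Δy)) - F (G y) - Φ (δG (α • Δy)) - Ψ (δG (α • Δy))) / α)
        (𝓝[>] (0 : ℝ)) (𝓝 0) := by
  -- choose ρ
  obtain ⟨ρ, hρ, hball⟩ : ∃ ρ > (0:ℝ), Metric.ball y ρ ⊆ S ∩ G ⁻¹' Ω :=
    Metric.mem_nhds_iff.mp (Filter.inter_mem (hS.mem_nhds hy) (hGc (hΩ.mem_nhds hGx)))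
  refine ⟨ρ, hρ, fun Δy hΔy => ?_, fun Δy => ?_⟩
  · have : y + Δy ∈ Metric.ball y ρ := by
      simpa [Metric.mem_ball, dist_eq_norm] using Metric.mem_ball.mp hΔy
    exact ⟨(hball this).1, (hball this).2⟩
  -- main part
  have oF0 : oF 0 = 0 := by
    have h := hexp 0 (by simpa using hGx)
    simp at h
    linarith
  set Δx : ℝ → X := fun α => G (y + α • Δy) - G y with hΔxdef
  have htendy : Tendsto (fun α : ℝ => y + α • Δy) (𝓝[>] (0:ℝ)) (𝓝 y) := by
    have hc : Continuous (fun α : ℝ => y + α • Δy) := by continuity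
    have := hc.tendsto' 0 y (by simp)
    exact this.mono_left nhdsWithin_le_nhds
  have hGt : Tendsto (fun α : ℝ => G (y + α • Δy)) (𝓝[>] (0:ℝ)) (𝓝 (G y)) :=
    hGc.tendsto.comp htendy
  have hΔx0 : Tendsto Δx (𝓝[>] (0:ℝ)) (𝓝 0) := by
    simpa using hGt.sub_const (G y)
  have hr := hG Δy
  -- ‖Δx α‖ / α → ‖δG Δy‖
  have hnorm : Tendsto (fun α : ℝ => ‖Δx α‖ / α) (𝓝[>] (0:ℝ)) (𝓝 ‖δG Δy‖) := by
    have key : ∀ᶠ α in 𝓝[>] (0:ℝ),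
        ‖‖Δx α‖ / α - ‖δG Δy‖‖ ≤ ‖G (y + α • Δy) - G y - α • δG Δy‖ / α := by
      filter_upwards [self_mem_nhdsWithin] with α (hα : 0 < α)
      have h1 : |‖Δx α‖ - ‖α • δG Δy‖| ≤ ‖Δx α - α • δG Δy‖ := abs_norm_sub_norm_le _ _
      have h2 : ‖α • δG Δy‖ = α * ‖δG Δy‖ := by
        rw [norm_smul, Real.norm_eq_abs, abs_of_pos hα]
      rw [Real.norm_eq_abs]
      have : ‖Δx α‖ / α - ‖δG Δy‖ = (‖Δx α‖ - ‖α • δG Δy‖) / α := by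
        rw [h2]; field_simp
      rw [this, abs_div, abs_of_pos hα]
      gcongr
    have := squeeze_zero_norm' key hr
    have h2 := this.add_const ‖δG Δy‖
    simpa using h2
  -- q tendsto
  have hq : Tendsto (fun x : X => |oF x| / ‖x‖) (𝓝 (0:X)) (𝓝 0) := by
    rw [← nhdsNE_sup_pure (0:X)]
    refine Tendsto.sup hoF ?_
    have : (fun x : X => |oF x| / ‖x‖) 0 = 0 := by simp [oF0]
    simpa [this] using tendsto_pure_nhds (fun x : X => |oF x| / ‖x‖) 0
  have hp : Tendsto (fun α : ℝ => |oF (Δx α)| / α) (𝓝[>] (0:ℝ)) (𝓝 0) := by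
    have h1 : Tendsto (fun α : ℝ => (|oF (Δx α)| / ‖Δx α‖) * (‖Δx α‖ / α))
        (𝓝[>] (0:ℝ)) (𝓝 (0 * ‖δG Δy‖)) := (hq.comp hΔx0).mul hnorm
    rw [zero_mul] at h1
    refine h1.congr' ?_
    filter_upwards [self_mem_nhdsWithin] with α (hα : 0 < α)
    by_cases h : Δx α = 0
    · simp [h, oF0]
    · have hn : ‖Δx α‖ ≠ 0 := norm_ne_zero_iff.mpr h
      field_simp
  -- eventual facts
  have hεball : ∀ᶠ α in 𝓝[>] (0:ℝ), Δx α ∈ Metric.ball (0:X) ε := by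
    exact hΔx0 (Metric.ball_mem_nhds _ hε)
  have hδball : ∀ᶠ α in 𝓝[>] (0:ℝ), α • δG Δy ∈ Metric.ball (0:X) ε := by
    have hc : Tendsto (fun α : ℝ => α • δG Δy) (𝓝[>] (0:ℝ)) (𝓝 0) := by
      have : Continuous (fun α : ℝ => α • δG Δy) := by continuity
      have := this.tendsto' 0 0 (by simp)
      exact this.mono_left nhdsWithin_le_nhds
    exact hc (Metric.ball_mem_nhds _ hε)
  have hΩev : ∀ᶠ α in 𝓝[>] (0:ℝ), G (y + α • Δy) ∈ Ω := hGt (hΩ.mem_nhds hGx)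
  -- squeeze
  refine squeeze_zero_norm' ?_ (by simpa using ((hr.const_mul (2 * (L:ℝ))).add hp))
  filter_upwards [self_mem_nhdsWithin, hεball, hδball, hΩev] with α hα h1 h2 h3
  have hα : (0:ℝ) < α := hα
  have hexp' : F (G (y + α • Δy)) - F (G y) = Φ (Δx α) + Ψ (Δx α) + oF (Δx α) := by
    have := hexp (Δx α) (by simpa [hΔxdef] using h3)
    simpa [hΔxdef] using this
  have hδ : δG (α • Δy) = α • δG Δy := by simp
  have lipΦ : |Φ (Δx α) - Φ (α • δG Δy)| ≤ (L:ℝ) * ‖Δx α - α • δG Δy‖ := by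
    have := hΦ.dist_le_mul _ h1 _ h2
    simpa [Real.dist_eq, dist_eq_norm] using this
  have lipΨ : |Ψ (Δx α) - Ψ (α • δG Δy)| ≤ (L:ℝ) * ‖Δx α - α • δG Δy‖ := by
    have := hΨ.dist_le_mul _ h1 _ h2
    simpa [Real.dist_eq, dist_eq_norm] using this
  have hnum : F (G (y + α • Δy)) - F (G y) - Φ (δG (α • Δy)) - Ψ (δG (α • Δy))
      = (Φ (Δx α) - Φ (α • δG Δy)) + (Ψ (Δx α) - Ψ (α • δG Δy)) + oF (Δx α) := by
    rw [hδ]; linarith [hexp']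
  rw [Real.norm_eq_abs, abs_div, abs_of_pos hα, hnum]
  have habs : |(Φ (Δx α) - Φ (α • δG Δy)) + (Ψ (Δx α) - Ψ (α • δG Δy)) + oF (Δx α)|
      ≤ 2 * (L:ℝ) * ‖Δx α - α • δG Δy‖ + |oF (Δx α)| := by
    calc _ ≤ |(Φ (Δx α) - Φ (α • δG Δy)) + (Ψ (Δx α) - Ψ (α • δG Δy))| + |oF (Δx α)| :=
          abs_add_le _ _
      _ ≤ |Φ (Δx α) - Φ (α • δG Δy)| + |Ψ (Δx α) - Ψ (α • δG Δy)| + |oF (Δx α)| := by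
          gcongr; exact abs_add_le _ _
      _ ≤ 2 * (L:ℝ) * ‖Δx α - α • δG Δy‖ + |oF (Δx α)| := by
          nlinarith [lipΦ, lipΨ]
  calc _ ≤ (2 * (L:ℝ) * ‖Δx α - α • δG Δy‖ + |oF (Δx α)|) / α :=
        by gcongr
    _ = 2 * (L:ℝ) * (‖G (y + α • Δy) - G y - α • δG Δy‖ / α) + |oF (Δx α)| / α := by
        rw [add_div, mul_div_assoc]
end
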